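/- Let n ≥ 2, let p' = (p'_1,…,p'_n) ∈ [0,1]^n, let 1 ≤ l < m ≤ n, and let u = e_l − e_m be the vector with 1 in coordinate l, −1 in coordinate m, and 0 elsewhere. Then the function t ↦ H(Z_{p' + t·u}) is strictly concave on the open interval of t for which all coordinates of p' + t·u lie strictly between 0 and 1. -/

import Mathlib

open Finset

/-- `b(k,p)`: the Poisson–binomial probability mass function. -/
noncomputable def pbin (n : ℕ) (p : Fin n → ℝ) (k : ℤ) : ℝ :=
  ∑ A ∈ Finset.univ.powerset.filter (fun A : Finset (Fin n) => (A.card : ℤ) = k),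
    (∏ i ∈ A, p i) * ∏ j ∈ Aᶜ, (1 - p j)

/-- Shannon entropy (base 2) of the Poisson–binomial distribution. -/
noncomputable def pbinEnt (n : ℕ) (p : Fin n → ℝ) : ℝ :=
  -∑ k ∈ Finset.range (n + 1), pbin n p k * Real.logb 2 (pbin n p k)

/-! Moving mass along `e_l - e_m` keeps `p_l + p_m` fixed, so the law `b` of `Z_p` is an affine
function of `w = p_l p_m`, whose slope is the second difference of the law `B` of the other coins.
The entropy along the line is therefore `φ ∘ w`, where `φ` is concave (a sum of `-x log x` over
affine functions) and `w t = (p'_l + t) (p'_m - t)` is strictly concave. Summation by parts gives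
`φ' = -(∑ⱼ Bⱼ Δ² log bⱼ) / log 2`, which is positive because Poisson–binomial laws are strictly
log-concave (Newton's inequality, preserved by each further Bernoulli convolution). So `φ` is
increasing and `φ ∘ w` is strictly concave. -/

structure IsStrictLogConcave (N : ℕ) (b : ℤ → ℝ) : Prop where
  eq_zero_of_neg : ∀ k < 0, b k = 0
  eq_zero_of_gt : ∀ k : ℤ, N < k → b k = 0
  pos : ∀ k : ℤ, 0 ≤ k → k ≤ N → 0 < b k
  mul_lt_sq : ∀ k : ℤ, 0 ≤ k → k ≤ N → b (k - 1) * b (k + 1) < b k ^ 2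

namespace IsStrictLogConcave

variable {N : ℕ} {b : ℤ → ℝ}

theorem nonneg (hb : IsStrictLogConcave N b) (k : ℤ) : 0 ≤ b k := by
  by_cases hk0 : k < 0
  · exact (hb.eq_zero_of_neg k hk0).ge
  by_cases hkN : (N : ℤ) < k
  · exact (hb.eq_zero_of_gt k hkN).ge
  exact (hb.pos k (by omega) (by omega)).le

theorem mul_le_sq (hb : IsStrictLogConcave N b) (k : ℤ) : b (k - 1) * b (k + 1) ≤ b k ^ 2 := by
  by_cases hk0 : k < 0
  · simp [hb.eq_zero_of_neg (k - 1) (by omega), sq_nonneg]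
  by_cases hkN : (N : ℤ) < k
  · simp [hb.eq_zero_of_gt (k + 1) (by omega), sq_nonneg]
  exact (hb.mul_lt_sq k (by omega) (by omega)).le

theorem mul_le_mul (hb : IsStrictLogConcave N b) (k : ℤ) :
    b (k - 2) * b (k + 1) ≤ b (k - 1) * b k := by
  by_cases hk : 0 ≤ k - 2 ∧ k + 1 ≤ N
  · have h₁ := hb.mul_lt_sq (k - 1) (by omega) (by omega)
    have h₂ := hb.mul_lt_sq k (by omega) (by omega)
    rw [show k - 1 - 1 = k - 2 by ring, sub_add_cancel] at h₁
    have := hb.pos (k - 2) (by omega) (by omega)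
    have := hb.pos (k - 1) (by omega) (by omega)
    have := hb.pos k (by omega) (by omega)
    have := hb.pos (k + 1) (by omega) (by omega)
    -- multiply the Newton inequalities at `k - 1` and `k`, then cancel `b (k - 1) * b k > 0`
    nlinarith [mul_lt_mul'' h₁ h₂ (by positivity) (by positivity)]
  · rcases not_and_or.1 hk with hk | hk
    · rw [hb.eq_zero_of_neg (k - 2) (by omega), zero_mul]
      exact mul_nonneg (hb.nonneg _) (hb.nonneg _)
    · rw [hb.eq_zero_of_gt (k + 1) (by omega), mul_zero]
      exact mul_nonneg (hb.nonneg _) (hb.nonneg _)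

theorem conv_bernoulli (hb : IsStrictLogConcave N b) {q : ℝ} (hq : q ∈ Set.Ioo 0 1) :
    IsStrictLogConcave (N + 1) (fun k => (1 - q) * b k + q * b (k - 1)) where
  eq_zero_of_neg k hk := by
    simp [hb.eq_zero_of_neg k hk, hb.eq_zero_of_neg (k - 1) (by omega)]
  eq_zero_of_gt k hk := by
    simp [hb.eq_zero_of_gt k (by omega), hb.eq_zero_of_gt (k - 1) (by push_cast at hk; omega)]
  pos k hk0 hkN := by
    obtain ⟨hq0, hq1⟩ := hq
    by_cases hk : k ≤ N
    · nlinarith [hb.pos k hk0 hk, hb.nonneg (k - 1)]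
    · nlinarith [hb.nonneg k, hb.pos (k - 1) (by omega) (by push_cast at hkN; omega)]
  mul_lt_sq k hk0 hkN := by
    obtain ⟨hq0, hq1⟩ := hq
    have hX := hb.mul_le_sq k
    have hY := hb.mul_le_sq (k - 1)
    have hZ := hb.mul_le_mul k
    rw [show k - 1 - 1 = k - 2 by ring, sub_add_cancel] at hY
    have hsplit : ((1 - q) * b k + q * b (k - 1)) ^ 2
        - ((1 - q) * b (k - 1) + q * b (k - 1 - 1)) * ((1 - q) * b (k + 1) + q * b (k + 1 - 1))
        = (1 - q) ^ 2 * (b k ^ 2 - b (k - 1) * b (k + 1))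
          + q ^ 2 * (b (k - 1) ^ 2 - b (k - 2) * b k)
          + q * (1 - q) * (b (k - 1) * b k - b (k - 2) * b (k + 1)) := by
      rw [show k - 1 - 1 = k - 2 by ring, add_sub_cancel_right]
      ring
    have hpos : 0 < (1 - q) ^ 2 * (b k ^ 2 - b (k - 1) * b (k + 1))
        + q ^ 2 * (b (k - 1) ^ 2 - b (k - 2) * b k)
        + q * (1 - q) * (b (k - 1) * b k - b (k - 2) * b (k + 1)) := by
      have hZ' : 0 ≤ q * (1 - q) * (b (k - 1) * b k - b (k - 2) * b (k + 1)) :=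
        mul_nonneg (mul_nonneg hq0.le (sub_nonneg.2 hq1.le)) (by linarith)
      by_cases hk : k ≤ N
      · have := hb.mul_lt_sq k hk0 hk
        nlinarith [mul_pos (pow_pos (sub_pos.2 hq1) 2) (sub_pos.2 this)]
      · have := hb.mul_lt_sq (k - 1) (by omega) (by push_cast at hkN; omega)
        rw [show k - 1 - 1 = k - 2 by ring, sub_add_cancel] at this
        nlinarith [mul_pos (pow_pos hq0 2) (sub_pos.2 this)]
    linarith

end IsStrictLogConcave

section SummationByParts

variable {B : ℤ → ℝ} {N : ℕ}

theorem sum_range_mul_shift (h0 : ∀ k < 0, B k = 0) (hN : ∀ k : ℤ, N < k → B k = 0)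
    (L : ℤ → ℝ) {i M : ℕ} (hM : N + i < M) :
    ∑ k ∈ range M, B (k - i) * L k = ∑ j ∈ range (N + 1), B j * L (j + i) := by
  obtain ⟨r, rfl⟩ : ∃ r, M = i + (N + 1) + r := ⟨M - i - (N + 1), by omega⟩
  rw [sum_range_add, sum_range_add, sum_eq_zero, sum_eq_zero (s := range r), zero_add, add_zero]
  · refine sum_congr rfl fun j _ => ?_
    push_cast
    rw [add_sub_cancel_left, add_comm (i : ℤ)]
  · intro j _
    rw [hN _ (by push_cast; omega), zero_mul]
  · intro k hk
    rw [h0 _ (by have := mem_range.1 hk; omega), zero_mul]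

theorem sum_secondDiff_mul (h0 : ∀ k < 0, B k = 0) (hN : ∀ k : ℤ, N < k → B k = 0)
    (L : ℤ → ℝ) :
    ∑ k ∈ range (N + 3), (B k - 2 * B (k - 1) + B (k - 2)) * L k
      = ∑ j ∈ range (N + 1), B j * (L j - 2 * L (j + 1) + L (j + 2)) := by
  have e₀ := sum_range_mul_shift h0 hN L (i := 0) (M := N + 3) (by omega)
  have e₁ := sum_range_mul_shift h0 hN L (i := 1) (M := N + 3) (by omega)
  have e₂ := sum_range_mul_shift h0 hN L (i := 2) (M := N + 3) (by omega)
  simp only [Nat.cast_zero, sub_zero, add_zero, Nat.cast_one, Nat.cast_ofNat] at e₀ e₁ e₂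
  simp only [add_mul, sub_mul, mul_add, mul_sub, sum_add_distrib, sum_sub_distrib, mul_assoc,
    ← mul_sum, mul_left_comm (B _) 2, e₀, e₁, e₂]

end SummationByParts

theorem IsStrictLogConcave.sum_secondDiff_mul_pos {B b : ℤ → ℝ} {N : ℕ}
    (hB : IsStrictLogConcave N B) (hb : IsStrictLogConcave (N + 2) b) :
    0 < ∑ k ∈ range (N + 3), (B k - 2 * B (k - 1) + B (k - 2)) * (-Real.log (b k) - 1) := by
  rw [sum_secondDiff_mul hB.eq_zero_of_neg hB.eq_zero_of_gt fun k => -Real.log (b k) - 1]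
  refine sum_pos (fun j hj => ?_) nonempty_range_add_one
  have hj : (j : ℤ) ≤ N := by have := mem_range.1 hj; omega
  refine mul_pos (hB.pos j (by positivity) hj) ?_
  have h₀ := hb.pos j (by positivity) (by push_cast; omega)
  have h₂ := hb.pos (j + 2) (by positivity) (by push_cast; omega)
  have newton := hb.mul_lt_sq (j + 1) (by positivity) (by push_cast; omega)
  rw [add_sub_cancel_right, add_assoc, one_add_one_eq_two] at newton
  have hlog := Real.log_lt_log (mul_pos h₀ h₂) newton
  rw [Real.log_mul h₀.ne' h₂.ne', Real.log_pow] at hlog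
  push_cast at hlog
  linarith

section PoissonBinomial

variable {ι : Type*} [DecidableEq ι]

noncomputable def pbinOn (s : Finset ι) (p : ι → ℝ) (k : ℤ) : ℝ :=
  ∑ A ∈ s.powerset.filter (fun A => (#A : ℤ) = k), (∏ i ∈ A, p i) * ∏ j ∈ s \ A, (1 - p j)

theorem pbinOn_empty (p : ι → ℝ) (k : ℤ) : pbinOn ∅ p k = if k = 0 then 1 else 0 := by
  by_cases h : k = 0 <;> simp [pbinOn, h, filter_singleton, eq_comm]

theorem pbinOn_insert {s : Finset ι} {a : ι} (ha : a ∉ s) (p : ι → ℝ) (k : ℤ) :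
    pbinOn (insert a s) p k = (1 - p a) * pbinOn s p k + p a * pbinOn s p (k - 1) := by
  simp only [pbinOn, sum_filter, sum_powerset_insert ha, mul_sum]
  congr 1 <;> refine sum_congr rfl fun A hA => ?_ <;>
    have haA : a ∉ A := fun h => ha (mem_powerset.1 hA h)
  · rw [insert_sdiff_of_notMem _ haA, prod_insert (by simp [ha])]
    split_ifs <;> ring
  · rw [insert_sdiff_insert, sdiff_insert_of_notMem ha, prod_insert haA, card_insert_of_notMem haA]
    push_cast
    split_ifs <;> first | (exfalso; omega) | ring

theorem pbinOn_congr {s : Finset ι} {p q : ι → ℝ} (h : ∀ i ∈ s, p i = q i) :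
    pbinOn s p = pbinOn s q := by
  funext k
  refine sum_congr rfl fun A hA => ?_
  have hAs := mem_powerset.1 (mem_filter.1 hA).1
  exact congrArg₂ (· * ·) (prod_congr rfl fun i hi => h i (hAs hi))
    (prod_congr rfl fun j hj => by rw [h j (mem_sdiff.1 hj).1])

theorem isStrictLogConcave_pbinOn {s : Finset ι} {p : ι → ℝ}
    (hp : ∀ i ∈ s, p i ∈ Set.Ioo 0 1) : IsStrictLogConcave #s (pbinOn s p) := by
  induction s using Finset.induction_on with
  | empty =>
    simp only [card_empty, funext (pbinOn_empty p)]
    constructor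
    · intro k hk
      simp [hk.ne]
    · intro k hk
      simp [show k ≠ 0 by omega]
    · intro k h0 h1
      simp [le_antisymm h1 h0]
    · intro k h0 h1
      obtain rfl := le_antisymm h1 h0
      norm_num
  | insert a s ha ih =>
    rw [card_insert_of_notMem ha, funext (pbinOn_insert ha p)]
    exact (ih fun i hi => hp i (mem_insert_of_mem hi)).conv_bernoulli (hp a (mem_insert_self a s))

/-- The law of the number of successes among the coins of `s` and two further coins whose success
probabilities have sum `σ` and product `x`; it is affine in `x`. -/
noncomputable def pbinPair (s : Finset ι) (p : ι → ℝ) (σ x : ℝ) (k : ℤ) : ℝ :=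
  (1 - σ) * pbinOn s p k + σ * pbinOn s p (k - 1)
    + (pbinOn s p k - 2 * pbinOn s p (k - 1) + pbinOn s p (k - 2)) * x

noncomputable def pbinPairEnt (s : Finset ι) (p : ι → ℝ) (σ x : ℝ) : ℝ :=
  (Real.log 2)⁻¹ * ∑ k ∈ range (#s + 3), Real.negMulLog (pbinPair s p σ x k)

theorem pbinOn_insert_insert {s : Finset ι} {a c : ι} (hac : a ≠ c) (ha : a ∉ s) (hc : c ∉ s)
    (p : ι → ℝ) (k : ℤ) :
    pbinOn (insert a (insert c s)) p k = pbinPair s p (p a + p c) (p a * p c) k := by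
  rw [pbinOn_insert (by simp [hac, ha]), pbinOn_insert hc, pbinOn_insert hc, pbinPair,
    sub_sub, one_add_one_eq_two]
  ring

theorem pbinPair_congr {s : Finset ι} {p q : ι → ℝ} (h : ∀ i ∈ s, p i = q i) (σ x : ℝ) :
    pbinPair s p σ x = pbinPair s q σ x := by
  unfold pbinPair
  rw [pbinOn_congr h]

theorem hasDerivAt_pbinPair (s : Finset ι) (p : ι → ℝ) (σ x : ℝ) (k : ℤ) :
    HasDerivAt (fun y => pbinPair s p σ y k)
      (pbinOn s p k - 2 * pbinOn s p (k - 1) + pbinOn s p (k - 2)) x := by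
  unfold pbinPair
  simpa only [mul_one] using ((hasDerivAt_id' x).const_mul _).const_add _

theorem hasDerivAt_pbinPairEnt {s : Finset ι} {p : ι → ℝ} {σ x : ℝ}
    (hx : ∀ k ∈ range (#s + 3), pbinPair s p σ x k ≠ 0) :
    HasDerivAt (pbinPairEnt s p σ) ((Real.log 2)⁻¹ * ∑ k ∈ range (#s + 3),
      (pbinOn s p k - 2 * pbinOn s p (k - 1) + pbinOn s p (k - 2))
        * (-Real.log (pbinPair s p σ x k) - 1)) x := by
  refine (HasDerivAt.fun_sum fun k hk => ?_).const_mul _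
  rw [mul_comm]
  exact (Real.hasDerivAt_negMulLog (hx k hk)).comp x (hasDerivAt_pbinPair s p σ x k)

theorem concaveOn_pbinPairEnt {s : Finset ι} {p : ι → ℝ} {σ : ℝ} {X : Set ℝ} (hX : Convex ℝ X)
    (hb : ∀ x ∈ X, ∀ k, 0 ≤ pbinPair s p σ x k) : ConcaveOn ℝ X (pbinPairEnt s p σ) := by
  refine ConcaveOn.smul (inv_nonneg.2 (Real.log_nonneg one_le_two)) ⟨hX, ?_⟩
  intro x hx y hy a b ha hb' hab
  simp only [smul_eq_mul, mul_sum, ← sum_add_distrib]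
  refine sum_le_sum fun k _ => ?_
  have haff : pbinPair s p σ (a * x + b * y) k
      = a * pbinPair s p σ x k + b * pbinPair s p σ y k := by
    simp only [pbinPair]
    linear_combination (-(1 - σ) * pbinOn s p k - σ * pbinOn s p (k - 1)) * hab
  rw [haff]
  exact Real.concaveOn_negMulLog.2 (Set.mem_Ici.2 (hb x hx k)) (Set.mem_Ici.2 (hb y hy k))
    ha hb' hab

theorem strictMonoOn_pbinPairEnt {s : Finset ι} {p : ι → ℝ} {σ : ℝ} {X : Set ℝ}
    (hX : Convex ℝ X) (hB : IsStrictLogConcave #s (pbinOn s p))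
    (hb : ∀ x ∈ X, IsStrictLogConcave (#s + 2) (pbinPair s p σ x)) :
    StrictMonoOn (pbinPairEnt s p σ) X := by
  have hcont : Continuous (pbinPairEnt s p σ) := by
    unfold pbinPairEnt pbinPair
    fun_prop
  refine strictMonoOn_of_deriv_pos hX hcont.continuousOn fun x hx => ?_
  have hbx := hb x (interior_subset hx)
  have hne : ∀ k ∈ range (#s + 3), pbinPair s p σ x k ≠ 0 := fun k hk =>
    (hbx.pos k (by positivity) (by have := mem_range.1 hk; omega)).ne'
  rw [(hasDerivAt_pbinPairEnt hne).deriv]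
  exact mul_pos (inv_pos.2 (Real.log_pos one_lt_two)) (hB.sum_secondDiff_mul_pos hbx)

end PoissonBinomial

theorem pbin_eq_pbinOn (n : ℕ) (p : Fin n → ℝ) : pbin n p = pbinOn univ p := by
  funext k
  exact sum_congr rfl fun A _ => by rw [compl_eq_univ_sdiff]

theorem isStrictLogConcave_pbin {n : ℕ} {p : Fin n → ℝ} (hp : ∀ i, p i ∈ Set.Ioo 0 1) :
    IsStrictLogConcave n (pbin n p) := by
  simpa [pbin_eq_pbinOn] using isStrictLogConcave_pbinOn (s := univ) fun i _ => hp i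

theorem pbinEnt_eq (n : ℕ) (p : Fin n → ℝ) :
    pbinEnt n p = (Real.log 2)⁻¹ * ∑ k ∈ range (n + 1), Real.negMulLog (pbin n p k) := by
  simp only [pbinEnt, Real.negMulLog, Real.logb, mul_sum, ← sum_neg_distrib]
  exact sum_congr rfl fun k _ => by ring

theorem pbin_eq_pbinPair {n : ℕ} (q : Fin n → ℝ) {l m : Fin n} (hlm : l ≠ m) :
    pbin n q = pbinPair {l, m}ᶜ q (q l + q m) (q l * q m) := by
  funext k
  have huniv : (univ : Finset (Fin n)) = insert l (insert m {l, m}ᶜ) := by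
    ext i
    by_cases hl : i = l <;> by_cases hm : i = m <;> simp [hl, hm]
  rw [pbin_eq_pbinOn, huniv, pbinOn_insert_insert hlm (by simp) (by simp)]

theorem card_compl_pair_add_two {n : ℕ} {l m : Fin n} (hlm : l ≠ m) :
    #({l, m}ᶜ : Finset (Fin n)) + 2 = n := by
  have h2 := card_le_univ ({l, m} : Finset (Fin n))
  rw [card_pair hlm, Fintype.card_fin] at h2
  rw [card_compl, card_pair hlm, Fintype.card_fin]
  omega

theorem pbin_line_eq_pbinPair {n : ℕ} (p' : Fin n → ℝ) {l m : Fin n} (hlm : l ≠ m) (t : ℝ) :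
    pbin n (fun i => p' i + t * if i = l then 1 else if i = m then -1 else 0)
      = pbinPair {l, m}ᶜ p' (p' l + p' m) ((p' l + t) * (p' m - t)) := by
  rw [pbin_eq_pbinPair _ hlm, pbinPair_congr (q := p') fun i hi => by simp_all]
  simp only [if_pos, if_neg hlm.symm]
  exact congrArg₂ (pbinPair _ p') (by ring) (by ring)

theorem pbinEnt_line_eq_pbinPairEnt {n : ℕ} (p' : Fin n → ℝ) {l m : Fin n} (hlm : l ≠ m)
    (t : ℝ) :
    pbinEnt n (fun i => p' i + t * if i = l then 1 else if i = m then -1 else 0)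
      = pbinPairEnt {l, m}ᶜ p' (p' l + p' m) ((p' l + t) * (p' m - t)) := by
  have hn : n + 1 = #({l, m}ᶜ : Finset (Fin n)) + 3 := by
    have := card_compl_pair_add_two hlm
    omega
  rw [pbinEnt_eq, pbin_line_eq_pbinPair p' hlm, pbinPairEnt, hn]

theorem convex_setOf_forall_add_mul_mem_Ioo {ι : Type*} (a c : ι → ℝ) :
    Convex ℝ {t : ℝ | ∀ i, 0 < a i + t * c i ∧ a i + t * c i < 1} := by
  intro x hx y hy α β hα hβ hαβ i
  have hcomb : a i + (α * x + β * y) * c i = α * (a i + x * c i) + β * (a i + y * c i) := by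
    linear_combination -(a i) * hαβ
  simp only [smul_eq_mul, hcomb]
  exact convex_Ioo (0 : ℝ) 1 (hx i) (hy i) hα hβ hαβ

theorem strictConcaveOn_add_mul_sub (a c : ℝ) :
    StrictConcaveOn ℝ Set.univ fun t => (a + t) * (c - t) := by
  refine ⟨convex_univ, fun x _ y _ hxy α β hα hβ hαβ => ?_⟩
  obtain rfl : β = 1 - α := by linarith
  simp only [smul_eq_mul]
  nlinarith [mul_pos (mul_pos hα hβ) (sq_pos_of_ne_zero (sub_ne_zero.2 hxy))]

theorem entropy_strictConcaveOn_line_general (n : ℕ) (p' : Fin n → ℝ) (l m : Fin n) (hlm : l < m)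
    (u : Fin n → ℝ) (hu : u = fun i => if i = l then 1 else if i = m then -1 else 0) :
    StrictConcaveOn ℝ {t : ℝ | ∀ i, 0 < p' i + t * u i ∧ p' i + t * u i < 1}
      (fun t => pbinEnt n (fun i => p' i + t * u i)) := by
  set D := {t : ℝ | ∀ i, 0 < p' i + t * u i ∧ p' i + t * u i < 1}
  subst hu
  set w : ℝ → ℝ := fun t => (p' l + t) * (p' m - t)
  have hD : Convex ℝ D := convex_setOf_forall_add_mul_mem_Ioo _ _
  have hX : Convex ℝ (w '' D) := (hD.isPreconnected.image w (by fun_prop)).convex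
  have hlc : ∀ t ∈ D,
      IsStrictLogConcave (#{l, m}ᶜ + 2) (pbinPair {l, m}ᶜ p' (p' l + p' m) (w t)) := by
    intro t ht
    rw [← pbin_line_eq_pbinPair p' hlm.ne, card_compl_pair_add_two hlm.ne]
    exact isStrictLogConcave_pbin ht
  rw [show (fun t => pbinEnt n _) = pbinPairEnt {l, m}ᶜ p' (p' l + p' m) ∘ w from
    funext (pbinEnt_line_eq_pbinPairEnt p' hlm.ne)]
  refine ConcaveOn.comp_strictConcaveOn (concaveOn_pbinPairEnt hX ?_)
    ((strictConcaveOn_add_mul_sub _ _).subset (Set.subset_univ D) hD) ?_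
  · rintro _ ⟨t, ht, rfl⟩
    exact (hlc t ht).nonneg
  · rintro _ ⟨t, ht, rfl⟩
    have hrest : ∀ i ∈ ({l, m}ᶜ : Finset (Fin n)), p' i ∈ Set.Ioo 0 1 := fun i hi => by
      obtain ⟨hil, him⟩ : i ≠ l ∧ i ≠ m := by simpa [not_or] using hi
      simpa [hil, him] using ht i
    exact strictMonoOn_pbinPairEnt hX (isStrictLogConcave_pbinOn hrest)
      (by rintro _ ⟨t', ht', rfl⟩; exact hlc t' ht') ⟨t, ht, rfl⟩

/-- The entropy `H(Z_p)` restricted to the line `p = p' + t·(e_l − e_m)` is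
strictly concave on the open interval of parameters `t` for which all
coordinates lie strictly between `0` and `1`. -/
theorem entropy_strictConcaveOn_line (n : ℕ) (hn : 2 ≤ n) (p' : Fin n → ℝ)
    (hp' : ∀ i, p' i ∈ Set.Icc (0 : ℝ) 1) (l m : Fin n) (hlm : l < m)
    (u : Fin n → ℝ) (hu : u = fun i => if i = l then 1 else if i = m then -1 else 0) :
    StrictConcaveOn ℝ {t : ℝ | ∀ i, 0 < p' i + t * u i ∧ p' i + t * u i < 1}
      (fun t => pbinEnt n (fun i => p' i + t * u i)) :=
  entropy_strictConcaveOn_line_general n p' l m hlm u hu
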